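/- Let ν ∈ ℝ, z₀ ∈ ℝ, and suppose g : [z₀,∞) → ℝ is C¹ with g(z₀) = -2πν and g integrable appropriately. Define χ(z) = (1/(2πi)) ∫_{z₀}^∞ log₀(z-ζ) dg(ζ) where log₀ is the logarithm with branch cut along arg = 0. Then there is a constant C such that for z approaching z₀ nontangentially to [z₀,∞), |χ(z) − χ(z₀)| ≤ C|z−z₀|(1 + |ln|z−z₀||). -/

import Mathlib

/-!
Since `log₀ w = log (-w) + πi` for the principal logarithm, `χ z - χ z₀` is
`(2πi)⁻¹ ∫ (log (ζ - z) - log (ζ - z₀)) g' ζ dζ`. With `δ = |z - z₀|`, split the ray at `z₀ + 2δ`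
and `z₀ + 2`. On `(z₀, z₀ + 2δ]` both logarithms are `O(|log δ|)` up to the integrable
`|log (ζ - z₀)|`, because nontangential approach keeps `|ζ - z| ≥ σδ`. Beyond `z₀ + 2δ` the
difference of logarithms is at most `(3/2) δ / (ζ - z₀)`; against the bounded `g'` on
`(z₀ + 2δ, z₀ + 2]` this integrates to `O(δ |log δ|)`, against the integrable `g'` beyond to `O(δ)`.
-/

open MeasureTheory Set Complex

lemma log_neg_add_pi_mul_I {w : ℂ} (hw : w ≠ 0) :
    log (-w) + Real.pi * I = (Real.log (‖w‖) : ℂ) + I *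
      ((if 0 < arg w then arg w else arg w + 2 * Real.pi : ℝ) : ℂ) := by
  apply Complex.ext
  · simp [log_re]
  · simp only [add_im, log_im, mul_im, ofReal_re, ofReal_im, I_re, I_im, mul_zero,
      mul_one, add_zero, zero_add]
    rcases lt_trichotomy w.im 0 with him | him | him
    · rw [arg_neg_eq_arg_add_pi_of_im_neg him, if_neg (arg_neg_iff.mpr him).not_gt]
      ring
    · rcases lt_or_gt_of_ne (fun h : w.re = 0 => hw (Complex.ext h him)) with hre | hre
      · rw [arg_eq_pi_iff.mpr ⟨hre, him⟩, if_pos Real.pi_pos,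
          arg_eq_zero_iff.mpr ⟨by simp [hre.le], by simp [him]⟩]
        ring
      · rw [arg_eq_zero_iff.mpr ⟨hre.le, him⟩, if_neg (lt_irrefl 0),
          arg_eq_pi_iff.mpr ⟨by simp [hre], by simp [him]⟩]
        ring
    · have harg : 0 < arg w := (arg_nonneg_iff.mpr him.le).lt_of_ne
        fun h => him.ne' (arg_eq_zero_iff.mp h.symm).2
      rw [arg_neg_eq_arg_sub_pi_of_im_pos him, if_pos harg]
      ring

lemma setIntegral_log0_mul_eq {log0 : ℂ → ℂ} (hlog0 : ∀ w : ℂ, w ≠ 0 →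
      log0 w = (Real.log (‖w‖) : ℂ) + I *
        ((if 0 < arg w then arg w else arg w + 2 * Real.pi : ℝ) : ℂ))
    {s : Set ℝ} (hs : MeasurableSet s) {w : ℂ} (hw : ∀ ζ ∈ s, w - ζ ≠ 0) (h : ℝ → ℂ) :
    ∫ ζ in s, log0 (w - ζ) * h ζ = ∫ ζ in s, (log (ζ - w) + Real.pi * I) * h ζ := by
  refine setIntegral_congr_fun hs fun ζ hζ => ?_
  rw [hlog0 _ (hw ζ hζ), ← log_neg_add_pi_mul_I (hw ζ hζ), neg_sub]

lemma norm_one_div_two_pi_mul_I_le_one : ‖1 / (2 * (Real.pi : ℂ) * I)‖ ≤ 1 := by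
  rw [norm_div, norm_one, norm_mul, norm_mul, Complex.norm_two, norm_real, norm_I, mul_one,
    Real.norm_of_nonneg Real.pi_pos.le, div_le_one (by positivity)]
  linarith [Real.pi_gt_three]

lemma norm_log_le_abs_log_norm_add_pi (u : ℂ) : ‖log u‖ ≤ |Real.log ‖u‖| + Real.pi := by
  calc ‖log u‖ = ‖(Real.log ‖u‖ : ℂ) + (arg u : ℂ) * I‖ := by
        rw [← log_re, ← log_im, re_add_im]
    _ ≤ |Real.log ‖u‖| + Real.pi := by
        refine (norm_add_le _ _).trans ?_
        rw [norm_mul, norm_I, mul_one, norm_real, norm_real]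
        exact add_le_add le_rfl (abs_arg_le_pi u)

lemma norm_log_sub_log_ofReal_le {t : ℝ} (ht : 0 < t) {u : ℂ} (hu : ‖u - t‖ ≤ t / 2) :
    ‖log u - log t‖ ≤ 3 / 2 * ‖u - t‖ / t := by
  have hsmall : ‖(u - t) / t‖ ≤ 1 / 2 := by
    rw [norm_div, norm_real, Real.norm_of_nonneg ht.le, div_le_iff₀ ht]; linarith
  have hne : 1 + (u - t) / t ≠ 0 := by
    intro h
    have : ‖(u - t) / t‖ = 1 := by rw [show (u - t) / t = -1 by linear_combination h]; simp
    linarith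
  have hu : u = t * (1 + (u - t) / t) := by
    have : (t : ℂ) ≠ 0 := ofReal_ne_zero.mpr ht.ne'
    field_simp; ring
  calc ‖log u - log t‖ = ‖log (1 + (u - t) / t)‖ := by
        rw [hu, log_ofReal_mul ht hne, ← hu, ofReal_log ht.le]; ring_nf
    _ ≤ 3 / 2 * ‖(u - t) / t‖ := norm_log_one_add_half_le_self hsmall
    _ = 3 / 2 * ‖u - t‖ / t := by rw [norm_div, norm_real, Real.norm_of_nonneg ht.le]; ring

open intervalIntegral in
lemma integral_abs_log_le {a : ℝ} (ha : 0 < a) :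
    ∫ t in (0 : ℝ)..a, |Real.log t| ≤ a * (|Real.log a| + 1) := by
  have hint : IntervalIntegrable (fun t => |Real.log a| + Real.log a - Real.log t) volume 0 a :=
    intervalIntegrable_const.sub intervalIntegrable_log'
  calc ∫ t in (0 : ℝ)..a, |Real.log t|
      ≤ ∫ t in (0 : ℝ)..a, (|Real.log a| + Real.log a - Real.log t) := by
        refine integral_mono_on ha.le intervalIntegrable_log'.abs hint fun t ht => ?_
        rcases ht.1.eq_or_lt with rfl | htpos
        · simpa using neg_le_iff_add_nonneg'.mp (neg_abs_le (Real.log a))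
        · have := Real.log_le_log htpos ht.2
          rw [abs_le]
          constructor <;> linarith [le_abs_self (Real.log a), neg_abs_le (Real.log a)]
    _ = a * (|Real.log a| + 1) := by
        rw [integral_sub intervalIntegrable_const intervalIntegrable_log',
          intervalIntegral.integral_const, integral_log]
        simp; ring

lemma IntervalIntegrable.integrableOn_Ioi {E : Type*} [NormedAddCommGroup E] {F : ℝ → E}
    {a b : ℝ} (ha : IntervalIntegrable F volume a b) (hb : IntegrableOn F (Ioi b)) (hab : a ≤ b) :
    IntegrableOn F (Ioi a) :=
  Ioc_union_Ioi_eq_Ioi hab ▸ ((intervalIntegrable_iff_integrableOn_Ioc_of_le hab).1 ha).union hb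

section
variable {E : Type*} [NormedAddCommGroup E] [NormedSpace ℝ E]

lemma intervalIntegrable_and_norm_integral_le_of_norm_le {F : ℝ → E} {φ : ℝ → ℝ} {a b : ℝ}
    (hab : a ≤ b) (hF : AEStronglyMeasurable F) (hφ : IntervalIntegrable φ volume a b)
    (h : ∀ t ∈ Ioc a b, ‖F t‖ ≤ φ t) :
    IntervalIntegrable F volume a b ∧ ‖∫ t in a..b, F t‖ ≤ ∫ t in a..b, φ t := by
  refine ⟨hφ.mono_fun' hF.restrict ?_, intervalIntegral.norm_integral_le_of_norm_le hab
    (ae_of_all _ h) hφ⟩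
  rw [uIoc_of_le hab]
  exact (ae_restrict_iff' measurableSet_Ioc).mpr (ae_of_all _ h)

lemma integrableOn_and_norm_integral_le_of_norm_le {α : Type*} [MeasurableSpace α]
    {μ : Measure α} {F : α → E} {φ : α → ℝ} {s : Set α} (hs : MeasurableSet s)
    (hF : AEStronglyMeasurable F μ) (hφ : IntegrableOn φ s μ) (h : ∀ t ∈ s, ‖F t‖ ≤ φ t) :
    IntegrableOn F s μ ∧ ‖∫ t in s, F t ∂μ‖ ≤ ∫ t in s, φ t ∂μ := by
  have hae : ∀ᵐ t ∂μ.restrict s, ‖F t‖ ≤ φ t := (ae_restrict_iff' hs).mpr (ae_of_all _ h)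
  exact ⟨hφ.mono' hF.restrict hae, norm_integral_le_of_norm_le hφ hae⟩

lemma norm_integral_sub_integral_le {α : Type*} [MeasurableSpace α] {μ : Measure α}
    {f g : α → E} (h : Integrable (fun x => f x - g x) μ) :
    ‖∫ x, f x ∂μ - ∫ x, g x ∂μ‖ ≤ ‖∫ x, (f x - g x) ∂μ‖ := by
  by_cases hf : Integrable f μ
  · have hg : Integrable g μ := (hf.sub h).congr (ae_of_all _ fun x => sub_sub_cancel _ _)
    rw [integral_sub hf hg]
  · -- then `g` is not integrable either, and both integrals are `0` by convention
    have hg : ¬ Integrable g μ := fun hg =>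
      hf ((h.add hg).congr (ae_of_all _ fun x => sub_add_cancel _ _))
    simp [integral_undef hf, integral_undef hg]

end

lemma exists_abs_deriv_le_of_contDiffOn_Ici {g : ℝ → ℝ} {a : ℝ} (hg : ContDiffOn ℝ 1 g (Ici a))
    (b : ℝ) : ∃ M, ∀ x ∈ Ioc a b, |deriv g x| ≤ M := by
  obtain ⟨M, hM⟩ := (isCompact_Icc (a := a) (b := b)).exists_bound_of_continuousOn
    ((hg.continuousOn_derivWithin (uniqueDiffOn_Ici a) le_rfl).mono Icc_subset_Ici_self)
  refine ⟨M, fun x hx => ?_⟩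
  rw [← derivWithin_of_mem_nhds (Ici_mem_nhds hx.1), ← Real.norm_eq_abs]
  exact hM x (Ioc_subset_Icc_self hx)

lemma le_norm_ofReal_sub_of_le_infDist {z : ℂ} {a r ζ : ℝ}
    (h : r ≤ Metric.infDist z {w : ℂ | w.im = 0 ∧ a ≤ w.re}) (hζ : a ≤ ζ) :
    r ≤ ‖(ζ : ℂ) - z‖ := by
  refine h.trans ((Metric.infDist_le_dist_of_mem (y := (ζ : ℂ)) ?_).trans_eq ?_)
  · simpa using hζ
  · rw [dist_comm, Complex.dist_eq]

section
variable {f : ℝ → ℝ} {z₀ σ δ M : ℝ} {z : ℂ}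

lemma measurable_log_sub_log_mul (hf : Measurable f) :
    Measurable fun ζ : ℝ => (log (ζ - z) - log (ζ - z₀)) * f ζ := by
  fun_prop

lemma norm_log_sub_log_le_of_far (hδ : 0 < δ) (hz : ‖z - z₀‖ ≤ δ) {ζ : ℝ}
    (hζ : z₀ + 2 * δ ≤ ζ) :
    ‖log (ζ - z) - log (ζ - z₀)‖ ≤ 3 / 2 * δ / (ζ - z₀) := by
  have ht : 0 < ζ - z₀ := by linarith
  have hcast : (ζ : ℂ) - z₀ = ((ζ - z₀ : ℝ) : ℂ) := by push_cast; ring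
  have hdist : ‖(ζ - z) - ((ζ - z₀ : ℝ) : ℂ)‖ = ‖z - z₀‖ := by
    rw [← hcast, ← norm_neg]; congr 1; ring
  rw [hcast]
  calc _ ≤ 3 / 2 * ‖(ζ - z) - ((ζ - z₀ : ℝ) : ℂ)‖ / (ζ - z₀) :=
        norm_log_sub_log_ofReal_le ht (by rw [hdist]; linarith)
    _ ≤ 3 / 2 * δ / (ζ - z₀) := by rw [hdist]; gcongr

lemma norm_log_sub_log_le_of_near (hσ : 0 < σ) (hδ : 0 < δ) (hδ1 : δ ≤ 1) (hz : ‖z - z₀‖ ≤ δ)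
    {ζ : ℝ} (hζ : ζ ∈ Ioc z₀ (z₀ + 2 * δ)) (hsep : σ * δ ≤ ‖(ζ : ℂ) - z‖) :
    ‖log (ζ - z) - log (ζ - z₀)‖ ≤ |Real.log σ| + |Real.log δ| + 6 + |Real.log (ζ - z₀)| := by
  have hcast : (ζ : ℂ) - z₀ = ((ζ - z₀ : ℝ) : ℂ) := by push_cast; ring
  have hupper : ‖(ζ : ℂ) - z‖ ≤ 3 := by
    calc ‖(ζ : ℂ) - z‖ ≤ ‖(ζ : ℂ) - z₀‖ + ‖z - z₀‖ := by
          rw [norm_sub_rev z]; exact norm_sub_le_norm_sub_add_norm_sub _ _ _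
      _ ≤ 3 := by
        rw [hcast, norm_real, Real.norm_of_nonneg (by linarith [hζ.1])]; linarith [hζ.2]
  have hlog_norm : |Real.log ‖(ζ : ℂ) - z‖| ≤ |Real.log σ| + |Real.log δ| + 2 := by
    have hlow : Real.log σ + Real.log δ ≤ Real.log ‖(ζ : ℂ) - z‖ := by
      rw [← Real.log_mul hσ.ne' hδ.ne']; exact Real.log_le_log (by positivity) hsep
    have hup : Real.log ‖(ζ : ℂ) - z‖ ≤ 2 :=
      calc _ ≤ Real.log 3 := Real.log_le_log ((mul_pos hσ hδ).trans_le hsep) hupper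
        _ ≤ 3 - 1 := Real.log_le_sub_one_of_pos (by norm_num)
        _ = 2 := by norm_num
    rw [abs_le]
    constructor <;> linarith [neg_abs_le (Real.log σ), neg_abs_le (Real.log δ),
      abs_nonneg (Real.log σ), abs_nonneg (Real.log δ)]
  calc ‖log (ζ - z) - log (ζ - z₀)‖ ≤ ‖log (ζ - z)‖ + ‖log (((ζ - z₀ : ℝ)) : ℂ)‖ := by
        rw [hcast]; exact norm_sub_le _ _
    _ ≤ (|Real.log σ| + |Real.log δ| + 2 + Real.pi) + |Real.log (ζ - z₀)| := by
        rw [← ofReal_log (by linarith [hζ.1]), norm_real, Real.norm_eq_abs]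
        gcongr
        exact (norm_log_le_abs_log_norm_add_pi _).trans (by gcongr)
    _ ≤ _ := by linarith [Real.pi_le_four]

lemma norm_integral_log_sub_log_mul_near_le (hf : Measurable f)
    (hM : ∀ ζ ∈ Ioc z₀ (z₀ + 2), |f ζ| ≤ M) (hσ : 0 < σ) (hδ : 0 < δ) (hδ1 : δ ≤ 1)
    (hz : ‖z - z₀‖ ≤ δ) (hsep : ∀ ζ : ℝ, z₀ < ζ → σ * δ ≤ ‖(ζ : ℂ) - z‖) :
    IntervalIntegrable (fun ζ : ℝ => (log (ζ - z) - log (ζ - z₀)) * f ζ) volume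
        z₀ (z₀ + 2 * δ) ∧
      ‖∫ ζ in z₀..z₀ + 2 * δ, (log (ζ - z) - log (ζ - z₀)) * f ζ‖ ≤
        2 * M * δ * (|Real.log σ| + 2 * |Real.log δ| + 8) := by
  set c := |Real.log σ| + |Real.log δ| + 6
  have hlog : IntervalIntegrable (fun ζ => |Real.log (ζ - z₀)|) volume z₀ (z₀ + 2 * δ) := by
    simpa [add_comm] using
      (intervalIntegral.intervalIntegrable_log' (a := 0) (b := 2 * δ)).abs.comp_sub_right z₀
  obtain ⟨hint, hbound⟩ := intervalIntegrable_and_norm_integral_le_of_norm_le (by linarith)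
    (measurable_log_sub_log_mul hf).aestronglyMeasurable
    ((intervalIntegrable_const (c := c)).add hlog |>.const_mul M)
    fun ζ hζ => by
      rw [norm_mul, norm_real, Real.norm_eq_abs, mul_comm M]
      exact mul_le_mul (norm_log_sub_log_le_of_near hσ hδ hδ1 hz hζ (hsep ζ hζ.1))
        (hM ζ ⟨hζ.1, by linarith [hζ.2]⟩) (abs_nonneg _) (by positivity)
  refine ⟨hint, hbound.trans ?_⟩
  have hlog2 : |Real.log (2 * δ)| ≤ 1 + |Real.log δ| := by
    rw [Real.log_mul two_ne_zero hδ.ne']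
    refine (abs_add_le _ _).trans (add_le_add_left ?_ _)
    rw [abs_of_nonneg (Real.log_nonneg one_le_two)]
    linarith [Real.log_le_sub_one_of_pos two_pos]
  have hint_log : ∫ ζ in z₀..z₀ + 2 * δ, |Real.log (ζ - z₀)| ≤ 2 * δ * (|Real.log δ| + 2) := by
    rw [intervalIntegral.integral_comp_sub_right (fun t => |Real.log t|), sub_self,
      add_sub_cancel_left]
    exact (integral_abs_log_le (by positivity)).trans (by nlinarith)
  rw [intervalIntegral.integral_const_mul, intervalIntegral.integral_add intervalIntegrable_const
    hlog, intervalIntegral.integral_const, smul_eq_mul, add_sub_cancel_left]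
  have hM0 : 0 ≤ M := (abs_nonneg _).trans (hM (z₀ + 2) ⟨by linarith, le_rfl⟩)
  nlinarith

lemma norm_integral_log_sub_log_mul_middle_le (hf : Measurable f)
    (hM : ∀ ζ ∈ Ioc z₀ (z₀ + 2), |f ζ| ≤ M) (hδ : 0 < δ) (hδ1 : δ ≤ 1) (hz : ‖z - z₀‖ ≤ δ) :
    IntervalIntegrable (fun ζ : ℝ => (log (ζ - z) - log (ζ - z₀)) * f ζ) volume
        (z₀ + 2 * δ) (z₀ + 2) ∧
      ‖∫ ζ in z₀ + 2 * δ..z₀ + 2, (log (ζ - z) - log (ζ - z₀)) * f ζ‖ ≤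
        3 / 2 * M * δ * |Real.log δ| := by
  have hinv : IntervalIntegrable (fun ζ => (ζ - z₀)⁻¹) volume (z₀ + 2 * δ) (z₀ + 2) := by
    refine (continuousOn_inv₀.comp (continuous_sub_right z₀).continuousOn ?_).intervalIntegrable
    intro ζ hζ
    rw [uIcc_of_le (by linarith)] at hζ
    exact sub_ne_zero.mpr (by linarith [hζ.1])
  obtain ⟨hint, hbound⟩ := intervalIntegrable_and_norm_integral_le_of_norm_le (by linarith)
    (measurable_log_sub_log_mul hf).aestronglyMeasurable (hinv.const_mul (3 / 2 * δ * M))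
    fun ζ hζ => by
      rw [norm_mul, norm_real, Real.norm_eq_abs,
        show 3 / 2 * δ * M * (ζ - z₀)⁻¹ = 3 / 2 * δ / (ζ - z₀) * M by ring]
      exact mul_le_mul (norm_log_sub_log_le_of_far hδ hz hζ.1.le)
        (hM ζ ⟨by linarith [hζ.1], hζ.2⟩) (abs_nonneg _)
        (div_nonneg (by positivity) (by linarith [hζ.1]))
  refine ⟨hint, hbound.trans ?_⟩
  rw [intervalIntegral.integral_const_mul, intervalIntegral.integral_comp_sub_right
    (fun t => t⁻¹), add_sub_cancel_left, add_sub_cancel_left,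
    integral_inv_of_pos (by positivity) two_pos, div_mul_cancel_left₀ two_ne_zero,
    Real.log_inv]
  have hM0 : 0 ≤ M := (abs_nonneg _).trans (hM (z₀ + 2) ⟨by linarith, le_rfl⟩)
  have := neg_le_abs (Real.log δ)
  nlinarith [mul_nonneg hM0 hδ.le]

lemma norm_integral_log_sub_log_mul_tail_le (hf : Measurable f) (hfi : IntegrableOn f (Ioi z₀))
    (hδ : 0 < δ) (hδ1 : δ ≤ 1) (hz : ‖z - z₀‖ ≤ δ) :
    IntegrableOn (fun ζ : ℝ => (log (ζ - z) - log (ζ - z₀)) * f ζ) (Ioi (z₀ + 2)) ∧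
      ‖∫ ζ in Ioi (z₀ + 2), (log (ζ - z) - log (ζ - z₀)) * f ζ‖ ≤
        3 / 4 * δ * ∫ ζ in Ioi z₀, |f ζ| := by
  have hsub : Ioi (z₀ + 2) ⊆ Ioi z₀ := Ioi_subset_Ioi (by linarith)
  obtain ⟨hint, hbound⟩ := integrableOn_and_norm_integral_le_of_norm_le measurableSet_Ioi
    (measurable_log_sub_log_mul hf).aestronglyMeasurable
    ((hfi.mono_set hsub).abs.const_mul (3 / 4 * δ)) fun ζ (hζ : z₀ + 2 < ζ) => by
      rw [norm_mul, norm_real, Real.norm_eq_abs]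
      refine mul_le_mul_of_nonneg_right ?_ (abs_nonneg _)
      refine (norm_log_sub_log_le_of_far hδ hz (by linarith)).trans ?_
      rw [div_le_iff₀ (by linarith)]
      nlinarith
  refine ⟨hint, hbound.trans ?_⟩
  rw [integral_const_mul]
  exact mul_le_mul_of_nonneg_left (setIntegral_mono_set hfi.abs
    (ae_of_all _ fun _ => abs_nonneg _) hsub.eventuallyLE) (by positivity)

theorem norm_integral_log_sub_log_mul_le (hf : Measurable f) (hfi : IntegrableOn f (Ioi z₀))
    (hM : ∀ ζ ∈ Ioc z₀ (z₀ + 2), |f ζ| ≤ M) (hσ : 0 < σ) (hδ : 0 < δ) (hδ1 : δ ≤ 1)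
    (hz : ‖z - z₀‖ ≤ δ) (hsep : ∀ ζ : ℝ, z₀ < ζ → σ * δ ≤ ‖(ζ : ℂ) - z‖) :
    IntegrableOn (fun ζ : ℝ => (log (ζ - z) - log (ζ - z₀)) * f ζ) (Ioi z₀) ∧
      ‖∫ ζ in Ioi z₀, (log (ζ - z) - log (ζ - z₀)) * f ζ‖ ≤
        (2 * M * (|Real.log σ| + 11) + ∫ ζ in Ioi z₀, |f ζ|) * δ * (1 + |Real.log δ|) := by
  obtain ⟨hint₁, hbound₁⟩ := norm_integral_log_sub_log_mul_near_le hf hM hσ hδ hδ1 hz hsep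
  obtain ⟨hint₂, hbound₂⟩ := norm_integral_log_sub_log_mul_middle_le hf hM hδ hδ1 hz
  obtain ⟨hint₃, hbound₃⟩ := norm_integral_log_sub_log_mul_tail_le hf hfi hδ hδ1 hz
  have hint₂₃ := hint₂.integrableOn_Ioi hint₃ (by linarith)
  refine ⟨hint₁.integrableOn_Ioi hint₂₃ (by linarith), ?_⟩
  rw [← intervalIntegral.integral_interval_add_Ioi' hint₁ hint₂₃,
    ← intervalIntegral.integral_interval_add_Ioi' hint₂ hint₃]
  have hM0 : 0 ≤ M := (abs_nonneg _).trans (hM (z₀ + 2) ⟨by linarith, le_rfl⟩)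
  have hI0 : 0 ≤ ∫ ζ in Ioi z₀, |f ζ| :=
    setIntegral_nonneg measurableSet_Ioi fun _ _ => abs_nonneg _
  refine (norm_add_le _ _).trans ((add_le_add le_rfl (norm_add_le _ _)).trans ?_)
  nlinarith [abs_nonneg (Real.log σ), abs_nonneg (Real.log δ), mul_nonneg hM0 hδ.le,
    mul_nonneg (mul_nonneg hM0 hδ.le) (abs_nonneg (Real.log δ)),
    mul_nonneg (mul_nonneg hM0 hδ.le) (abs_nonneg (Real.log σ)),
    mul_nonneg hI0 hδ.le, mul_nonneg (mul_nonneg hI0 hδ.le) (abs_nonneg (Real.log δ))]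

end

theorem stmt_12_general (z₀ : ℝ) (g : ℝ → ℝ)
    (hg : ContDiffOn ℝ 1 g (Set.Ici z₀))
    (hint : IntegrableOn (deriv g) (Set.Ioi z₀))
    (log0 : ℂ → ℂ)
    (hlog0 : ∀ w : ℂ, w ≠ 0 →
      log0 w = (Real.log (‖w‖) : ℂ) + Complex.I *
        ((if 0 < Complex.arg w then Complex.arg w else Complex.arg w + 2 * Real.pi : ℝ) : ℂ))
    (χ : ℂ → ℂ)
    (hχ : ∀ z : ℂ, χ z = (1 / (2 * (Real.pi : ℂ) * Complex.I)) *
      ∫ ζ in Set.Ioi z₀, log0 (z - (ζ : ℂ)) * (Complex.ofReal (deriv g ζ))) :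
    ∀ σ ∈ Set.Ioo (0 : ℝ) 1, ∃ C > (0 : ℝ), ∀ z : ℂ, z ≠ (z₀ : ℂ) →
      ‖z - (z₀ : ℂ)‖ ≤ 1 →
      σ * ‖z - (z₀ : ℂ)‖ ≤
        Metric.infDist z {w : ℂ | w.im = 0 ∧ z₀ ≤ w.re} →
      ‖χ z - χ (z₀ : ℂ)‖ ≤
        C * ‖z - (z₀ : ℂ)‖ *
          (1 + |Real.log (‖z - (z₀ : ℂ)‖)|) := by
  rintro σ ⟨hσ, -⟩
  obtain ⟨M, hM⟩ := exists_abs_deriv_le_of_contDiffOn_Ici hg (z₀ + 2)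
  set K := 2 * M * (|Real.log σ| + 11) + ∫ ζ in Ioi z₀, |deriv g ζ|
  refine ⟨max K 1, lt_max_of_lt_right one_pos, fun z hz hz1 hdist => ?_⟩
  have hδ : 0 < ‖z - z₀‖ := norm_pos_iff.mpr (sub_ne_zero.mpr hz)
  have hsep (ζ : ℝ) (hζ : z₀ < ζ) : σ * ‖z - z₀‖ ≤ ‖(ζ : ℂ) - z‖ :=
    le_norm_ofReal_sub_of_le_infDist hdist hζ.le
  have hz_ne (ζ : ℝ) (hζ : ζ ∈ Ioi z₀) : z - ζ ≠ 0 := by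
    rw [← norm_pos_iff, norm_sub_rev]; exact (mul_pos hσ hδ).trans_le (hsep ζ hζ)
  have hz₀_ne (ζ : ℝ) (hζ : ζ ∈ Ioi z₀) : (z₀ : ℂ) - ζ ≠ 0 :=
    sub_ne_zero.mpr (ofReal_injective.ne hζ.ne)
  obtain ⟨hint_diff, hbound⟩ :=
    norm_integral_log_sub_log_mul_le (measurable_deriv g) hint hM hσ hδ hz1 le_rfl hsep
  have hdiff : ‖(∫ ζ in Ioi z₀, (log (ζ - z) + Real.pi * I) * deriv g ζ) -
      ∫ ζ in Ioi z₀, (log (ζ - z₀) + Real.pi * I) * deriv g ζ‖ ≤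
      ‖∫ ζ in Ioi z₀, (log (ζ - z) - log (ζ - z₀)) * deriv g ζ‖ :=
    (norm_integral_sub_integral_le (hint_diff.congr (ae_of_all _ fun ζ => by ring))).trans_eq
      (by congr 2; ext ζ; ring)
  rw [hχ, hχ, setIntegral_log0_mul_eq hlog0 measurableSet_Ioi hz_ne,
    setIntegral_log0_mul_eq hlog0 measurableSet_Ioi hz₀_ne, ← mul_sub, norm_mul]
  calc _ ≤ 1 * (K * ‖z - z₀‖ * (1 + |Real.log ‖z - z₀‖|)) := mul_le_mul
        norm_one_div_two_pi_mul_I_le_one (hdiff.trans hbound) (norm_nonneg _) zero_le_one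
    _ ≤ max K 1 * ‖z - z₀‖ * (1 + |Real.log ‖z - z₀‖|) := by
        rw [one_mul]; gcongr; exact le_max_left _ _

/-- Modulus-of-continuity estimate for the logarithmic Cauchy integral
`χ(z) = (1/(2πi)) ∫_{z₀}^∞ log₀(z-ζ) dg(ζ)` near `z₀`, for nontangential approach to the
contour `[z₀,∞)`. -/
theorem stmt_12 (ν z₀ : ℝ) (g : ℝ → ℝ)
    (hg : ContDiffOn ℝ 1 g (Set.Ici z₀))
    (hg0 : g z₀ = -2 * Real.pi * ν)
    (hint : IntegrableOn (deriv g) (Set.Ioi z₀))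
    (hint2 : IntegrableOn (fun ζ : ℝ => Real.log (1 + |ζ|) * |deriv g ζ|) (Set.Ioi z₀))
    (log0 : ℂ → ℂ)
    (hlog0 : ∀ w : ℂ, w ≠ 0 →
      log0 w = (Real.log (‖w‖) : ℂ) + Complex.I *
        ((if 0 < Complex.arg w then Complex.arg w else Complex.arg w + 2 * Real.pi : ℝ) : ℂ))
    (χ : ℂ → ℂ)
    (hχ : ∀ z : ℂ, χ z = (1 / (2 * (Real.pi : ℂ) * Complex.I)) *
      ∫ ζ in Set.Ioi z₀, log0 (z - (ζ : ℂ)) * (Complex.ofReal (deriv g ζ))) :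
    ∀ σ ∈ Set.Ioo (0 : ℝ) 1, ∃ C > (0 : ℝ), ∀ z : ℂ, z ≠ (z₀ : ℂ) →
      ‖z - (z₀ : ℂ)‖ ≤ 1 →
      σ * ‖z - (z₀ : ℂ)‖ ≤
        Metric.infDist z {w : ℂ | w.im = 0 ∧ z₀ ≤ w.re} →
      ‖χ z - χ (z₀ : ℂ)‖ ≤
        C * ‖z - (z₀ : ℂ)‖ *
          (1 + |Real.log (‖z - (z₀ : ℂ)‖)|) :=
  stmt_12_general z₀ g hg hint log0 hlog0 χ hχ
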